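/- arXiv:2412.07764 — 4 statements merged into one kernel-verified Lean document; each statement's English description precedes it below -/
import Mathlib

section
/- Let S be an operator satisfying S = Q₀SP₀ where P₀ is the zero-eigenspace projector of a Hermitian H₀ with spectral gap Δ and pseudoinverse R₀, W Hermitian, H := H₀ + W, and H_eff := P₀WP₀ - P₀WR₀WP₀. Then ∫₀ᵗ e^{iHτ} S e^{-iH_eff τ} dτ = -i[e^{iHτ} R₀ S e^{-iH_eff τ}]₀ᵗ - ∫₀ᵗ e^{iHτ} P₀WR₀S e^{-iH_eff τ} dτ + ∫₀ᵗ e^{iHτ} S̃ e^{-iH_eff τ} dτ, where S̃ := -Q₀WR₀S + R₀SWP₀ - R₀SWR₀WP₀ satisfies S̃ = Q₀S̃P₀ and ‖S̃‖ ≤ (2‖W‖/Δ + ‖W‖²/Δ²)‖S‖. -/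
/-!
Since `H₀R₀S = Q₀S = S` and `R₀SP₀ = R₀S`, a direct computation gives
`H(R₀S) - (R₀S)H_eff = S + P₀WR₀S - S̃`. For any `C`, the integrand
`e^{iHτ} (HC - CH_eff) e^{-iH_eff τ}` is `-i d/dτ (e^{iHτ} C e^{-iH_eff τ})`, so taking `C = R₀S`
and integrating turns the integral of `S` into the boundary term plus the integrals of `-P₀WR₀S`
and `S̃`. The bound on `‖S̃‖` follows from `‖P₀‖, ‖Q₀‖ ≤ 1` (orthogonal projections) and
`‖R₀‖ ≤ 1/Δ`; the latter holds because `R₀x` is orthogonal to `ker H₀`, where `H₀` is stretched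
by at least `Δ`, while `H₀R₀x = Q₀x`.
-/

open NormedSpace
open Complex (I)

section Ring

variable {A : Type*} [Ring A]

theorem IsIdempotentElem.mul_eq_of_eq_mul_mul_left {p q x : A} (hp : IsIdempotentElem p)
    (hx : x = p * x * q) : p * x = x := by
  rw [hx, ← mul_assoc, ← mul_assoc, hp.eq]

theorem IsIdempotentElem.mul_eq_of_eq_mul_mul_right {p q x : A} (hq : IsIdempotentElem q)
    (hx : x = p * x * q) : x * q = x := by
  rw [hx, mul_assoc, hq.eq]

def effHamiltonian (P W R : A) : A := P * W * P - P * W * R * W * P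

def sTilde (P W R S : A) : A := -((1 - P) * W * R * S) + R * S * W * P - R * S * W * R * W * P

variable {P W R S : A}

theorem sTilde_eq_one_sub_mul_mul (hP : IsIdempotentElem P) (hR : (1 - P) * R = R)
    (hS : S * P = S) : sTilde P W R S = (1 - P) * sTilde P W R S * P := by
  have hleft : (1 - P) * sTilde P W R S = sTilde P W R S := by
    simp only [sTilde, mul_add, mul_sub, mul_neg, ← mul_assoc, hP.one_sub.eq, hR]
  have hright : sTilde P W R S * P = sTilde P W R S := by
    simp only [sTilde, add_mul, sub_mul, neg_mul, mul_assoc, hP.eq, hS]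
  rw [hleft, hright]

theorem add_mul_sub_mul_effHamiltonian (H₀ : A) (hH₀R : H₀ * R = 1 - P)
    (hQS : (1 - P) * S = S) (hSP : S * P = S) :
    (H₀ + W) * (R * S) - R * S * effHamiltonian P W R = S + P * W * R * S - sTilde P W R S := by
  have hH₀RS : H₀ * (R * S) = S := by rw [← mul_assoc, hH₀R, hQS]
  have hRSP : ∀ X : A, R * S * (P * X) = R * S * X := fun X => by
    rw [← mul_assoc, mul_assoc R, hSP]
  simp only [effHamiltonian, sTilde, add_mul, hH₀RS, mul_sub, mul_assoc P, hRSP]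
  noncomm_ring

end Ring

theorem norm_sTilde_le {A : Type*} [NormedRing A] {P W R S : A} {r : ℝ} (hP : ‖P‖ ≤ 1)
    (hQ : ‖1 - P‖ ≤ 1) (hR : ‖R‖ ≤ r) :
    ‖sTilde P W R S‖ ≤ (2 * ‖W‖ * r + ‖W‖ ^ 2 * r ^ 2) * ‖S‖ := by
  have h₁ : ‖(1 - P) * W * R * S‖ ≤ 1 * ‖W‖ * r * ‖S‖ :=
    norm_mul_le_of_le (norm_mul_le_of_le (norm_mul_le_of_le hQ le_rfl) hR) le_rfl
  have h₂ : ‖R * S * W * P‖ ≤ r * ‖S‖ * ‖W‖ * 1 :=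
    norm_mul_le_of_le (norm_mul_le_of_le (norm_mul_le_of_le hR le_rfl) le_rfl) hP
  have h₃ : ‖R * S * W * R * W * P‖ ≤ r * ‖S‖ * ‖W‖ * r * ‖W‖ * 1 :=
    norm_mul_le_of_le (norm_mul_le_of_le (norm_mul_le_of_le (norm_mul_le_of_le
      (norm_mul_le_of_le hR le_rfl) le_rfl) hR) le_rfl) hP
  calc ‖sTilde P W R S‖
      ≤ ‖(1 - P) * W * R * S‖ + ‖R * S * W * P‖ + ‖R * S * W * R * W * P‖ :=
        (norm_sub_le _ _).trans <| add_le_add_left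
          ((norm_add_le _ _).trans_eq (by rw [norm_neg])) _
    _ ≤ (2 * ‖W‖ * r + ‖W‖ ^ 2 * r ^ 2) * ‖S‖ := by linarith

section Gap

variable {E : Type*} [NormedAddCommGroup E] [InnerProductSpace ℂ E] [FiniteDimensional ℂ E]

theorem IsSelfAdjoint.mul_norm_le_norm_apply_of_mem_orthogonal_ker {T : E →L[ℂ] E}
    (hT : IsSelfAdjoint T) {Δ : ℝ} (hgap : ∀ μ ∈ spectrum ℂ T, μ ≠ 0 → Δ ≤ ‖μ‖) {y : E}
    (hy : y ∈ (LinearMap.ker (T : E →ₗ[ℂ] E))ᗮ) :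
    Δ * ‖y‖ ≤ ‖T y‖ := by
  rcases le_or_gt Δ 0 with hΔ | hΔ
  · exact (mul_nonpos_of_nonpos_of_nonneg hΔ (norm_nonneg y)).trans (norm_nonneg _)
  have hT' := hT.isSymmetric
  set b := hT'.eigenvectorBasis rfl
  set μ := hT'.eigenvalues rfl
  -- In an eigenbasis of `T`, the coordinates of `y` along eigenvalue `0` vanish.
  have hcoeff : ∀ i, Δ ^ 2 * ‖b.repr y i‖ ^ 2 ≤ ‖(μ i : ℂ) * b.repr y i‖ ^ 2 := by
    intro i
    by_cases hμ : μ i = 0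
    · have hbi : b i ∈ LinearMap.ker (T : E →ₗ[ℂ] E) := by
        simp [LinearMap.mem_ker, b, μ, hT'.apply_eigenvectorBasis, ← hμ]
      simp [b.repr_apply_apply, Submodule.inner_right_of_mem_orthogonal hbi hy]
    · have hμΔ : Δ ≤ ‖(μ i : ℂ)‖ := by
        refine hgap _ ?_ (by exact_mod_cast hμ)
        rw [ContinuousLinearMap.spectrum_eq]
        exact (hT'.hasEigenvalue_eigenvalues rfl i).mem_spectrum
      rw [norm_mul, mul_pow]
      gcongr
  have hsq : (Δ * ‖y‖) ^ 2 ≤ ‖T y‖ ^ 2 := by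
    rw [mul_pow, ← b.repr.norm_map, ← b.repr.norm_map (T y), EuclideanSpace.norm_sq_eq,
      EuclideanSpace.norm_sq_eq, Finset.mul_sum]
    refine Finset.sum_le_sum fun i _ => ?_
    have hdiag : b.repr (T y) i = μ i * b.repr y i :=
      hT'.eigenvectorBasis_apply_self_apply rfl y i
    rw [hdiag]
    exact hcoeff i
  exact (pow_le_pow_iff_left₀ (by positivity) (norm_nonneg _) two_ne_zero).1 hsq

theorem norm_le_inv_of_mul_eq_one_sub {T P R : E →L[ℂ] E} (hT : IsSelfAdjoint T)
    (hP : IsStarProjection P) {Δ : ℝ} (hΔ : 0 < Δ)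
    (hgap : ∀ μ ∈ spectrum ℂ T, μ ≠ 0 → Δ ≤ ‖μ‖) (hker : ∀ x, T x = 0 → P x = x)
    (hTR : T * R = 1 - P) (hR : (1 - P) * R = R) : ‖R‖ ≤ Δ⁻¹ := by
  refine ContinuousLinearMap.opNorm_le_bound _ (inv_nonneg.2 hΔ.le) fun x => ?_
  have hRx : R x ∈ (LinearMap.ker (T : E →ₗ[ℂ] E))ᗮ := by
    refine (Submodule.mem_orthogonal _ _).2 fun u hu => ?_
    have hQu : (1 - P) u = 0 := by simp [hker u hu]
    rw [← hR, mul_apply_eq_comp, ← hP.one_sub.isSelfAdjoint.adjoint_eq,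
      ContinuousLinearMap.adjoint_inner_right, hQu, inner_zero_left]
  have hTRx : T (R x) = (1 - P) x := by rw [← mul_apply_eq_comp, hTR]
  rw [inv_mul_eq_div, le_div_iff₀' hΔ]
  calc Δ * ‖R x‖ ≤ ‖T (R x)‖ := hT.mul_norm_le_norm_apply_of_mem_orthogonal_ker hgap hRx
    _ ≤ ‖x‖ := by
      rw [hTRx]
      simpa using (1 - P).le_of_opNorm_le (hP.one_sub.norm_le) x

end Gap

theorem mul_ofReal_smul {M : Type*} [AddCommGroup M] [Module ℂ M] (z : ℂ) (τ : ℝ) (m : M) :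
    (z * τ) • m = τ • z • m := by
  rw [mul_comm, ← smul_smul, Complex.coe_smul]

section Exponential

variable {𝔸 : Type*} [NormedRing 𝔸] [CompleteSpace 𝔸]

theorem continuous_exp_smul [NormedAlgebra ℝ 𝔸] (M : 𝔸) :
    Continuous fun τ : ℝ => exp (τ • M) :=
  continuous_iff_continuousAt.2 fun τ => (hasDerivAt_exp_smul_const M τ).continuousAt

theorem integral_exp_smul_mul_mul_exp_smul [NormedAlgebra ℝ 𝔸] (M N C : 𝔸) (t : ℝ) :
    ∫ τ in (0 : ℝ)..t, exp (τ • M) * (M * C + C * N) * exp (τ • N) =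
      exp (t • M) * C * exp (t • N) - C := by
  have hderiv : ∀ τ : ℝ, HasDerivAt (fun s : ℝ => exp (s • M) * C * exp (s • N))
      (exp (τ • M) * (M * C + C * N) * exp (τ • N)) τ := fun τ =>
    (((hasDerivAt_exp_smul_const M τ).mul_const C).mul
      (hasDerivAt_exp_smul_const' N τ)).congr_deriv (by noncomm_ring)
  have hint := (((continuous_exp_smul M).mul (continuous_const (y := M * C + C * N))).mul
    (continuous_exp_smul N)).intervalIntegrable (μ := MeasureTheory.volume) 0 t
  simpa using intervalIntegral.integral_eq_sub_of_hasDerivAt (fun τ _ => hderiv τ) hint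

variable [NormedAlgebra ℂ 𝔸]

theorem continuous_exp_mul_mul_exp (A B X : 𝔸) :
    Continuous fun τ : ℝ => exp ((I * τ) • A) * X * exp ((-I * τ) • B) := by
  simp only [mul_ofReal_smul]
  exact ((continuous_exp_smul _).mul continuous_const).mul (continuous_exp_smul _)

theorem integral_exp_mul_commutator_mul_exp (A B C : 𝔸) (t : ℝ) :
    ∫ τ in (0 : ℝ)..t, exp ((I * τ) • A) * (A * C - C * B) * exp ((-I * τ) • B) =
      -I • (exp ((I * t) • A) * C * exp ((-I * t) • B) - C) := by
  have hcomm : (I • A) * C + C * (-I • B) = I • (A * C - C * B) := by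
    rw [smul_mul_assoc, mul_smul_comm, smul_sub, neg_smul, sub_eq_add_neg]
  have h := integral_exp_smul_mul_mul_exp_smul (I • A) (-I • B) C t
  rw [hcomm] at h
  simp only [mul_smul_comm, smul_mul_assoc, intervalIntegral.integral_smul] at h
  simp only [mul_ofReal_smul]
  rw [← h, smul_smul, neg_mul, Complex.I_mul_I, neg_neg, one_smul]

end Exponential

theorem int_by_parts_trick_general
    {E : Type*} [NormedAddCommGroup E] [InnerProductSpace ℂ E] [FiniteDimensional ℂ E]
    (H₀ W P₀ R₀ S : E →L[ℂ] E) (Δ : ℝ) (hΔ : 0 < Δ)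
    (hH₀ : IsSelfAdjoint H₀)
    (hP₀sa : IsSelfAdjoint P₀) (hP₀idem : P₀ * P₀ = P₀)
    (hP₀ker : ∀ x : E, H₀ x = 0 ↔ P₀ x = x)
    (hgap : ∀ μ ∈ spectrum ℂ H₀, μ ≠ 0 → Δ ≤ ‖μ‖)
    (hR₀ : R₀ = (1 - P₀) * R₀ * (1 - P₀))
    (hH₀R₀ : H₀ * R₀ = 1 - P₀)
    (hS : S = (1 - P₀) * S * P₀) :
    let H := H₀ + W
    let Heff := P₀ * W * P₀ - P₀ * W * R₀ * W * P₀
    let Stilde := -((1 - P₀) * W * R₀ * S) + R₀ * S * W * P₀ - R₀ * S * W * R₀ * W * P₀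
    (Stilde = (1 - P₀) * Stilde * P₀) ∧
    (‖Stilde‖ ≤ (2 * ‖W‖ / Δ + ‖W‖ ^ 2 / Δ ^ 2) * ‖S‖) ∧
    (∀ t : ℝ,
      (∫ τ in (0:ℝ)..t, NormedSpace.exp ((Complex.I * (τ : ℂ)) • H) * S *
          NormedSpace.exp ((-(Complex.I) * (τ : ℂ)) • Heff))
      = -(Complex.I) •
          (NormedSpace.exp ((Complex.I * (t : ℂ)) • H) * (R₀ * S) *
              NormedSpace.exp ((-(Complex.I) * (t : ℂ)) • Heff)
            - R₀ * S)
        - (∫ τ in (0:ℝ)..t, NormedSpace.exp ((Complex.I * (τ : ℂ)) • H) *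
            (P₀ * W * R₀ * S) * NormedSpace.exp ((-(Complex.I) * (τ : ℂ)) • Heff))
        + (∫ τ in (0:ℝ)..t, NormedSpace.exp ((Complex.I * (τ : ℂ)) • H) * Stilde *
            NormedSpace.exp ((-(Complex.I) * (τ : ℂ)) • Heff))) := by
  intro H Heff Stilde
  have hP : IsStarProjection P₀ := ⟨hP₀idem, hP₀sa⟩
  have hQS : (1 - P₀) * S = S := hP.isIdempotentElem.one_sub.mul_eq_of_eq_mul_mul_left hS
  have hSP : S * P₀ = S := hP.isIdempotentElem.mul_eq_of_eq_mul_mul_right hS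
  have hQR : (1 - P₀) * R₀ = R₀ := hP.isIdempotentElem.one_sub.mul_eq_of_eq_mul_mul_left hR₀
  refine ⟨sTilde_eq_one_sub_mul_mul hP.isIdempotentElem hQR hSP, ?_, fun t => ?_⟩
  · have hR : ‖R₀‖ ≤ Δ⁻¹ :=
      norm_le_inv_of_mul_eq_one_sub hH₀ hP hΔ hgap (fun x => (hP₀ker x).1) hH₀R₀ hQR
    calc ‖Stilde‖ ≤ (2 * ‖W‖ * Δ⁻¹ + ‖W‖ ^ 2 * Δ⁻¹ ^ 2) * ‖S‖ :=
          norm_sTilde_le hP.norm_le hP.one_sub.norm_le hR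
      _ = (2 * ‖W‖ / Δ + ‖W‖ ^ 2 / Δ ^ 2) * ‖S‖ := by ring
  · have hcomm : H * (R₀ * S) - R₀ * S * Heff = S + P₀ * W * R₀ * S - Stilde :=
      add_mul_sub_mul_effHamiltonian H₀ hH₀R₀ hQS hSP
    have hint : ∀ X, IntervalIntegrable
        (fun τ : ℝ => exp ((I * τ) • H) * X * exp ((-I * τ) • Heff)) MeasureTheory.volume 0 t :=
      fun X => (continuous_exp_mul_mul_exp H Heff X).intervalIntegrable 0 t
    have key := integral_exp_mul_commutator_mul_exp H Heff (R₀ * S) t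
    rw [hcomm] at key
    simp only [mul_add, mul_sub, add_mul, sub_mul] at key
    rw [intervalIntegral.integral_sub ((hint _).add (hint _)) (hint _),
      intervalIntegral.integral_add (hint _) (hint _)] at key
    rw [← key]
    abel

/-- Integration-by-parts trick (Lemma adapted from Burgarth et al.): for an operator `S`
with `S = Q₀SP₀`, the oscillatory integral `∫₀ᵗ e^{iHτ} S e^{-iH_eff τ} dτ` can be
rewritten as a boundary term plus two integrals, where
`S̃ := -Q₀WR₀S + R₀SWP₀ - R₀SWR₀WP₀` satisfies `S̃ = Q₀S̃P₀` and
`‖S̃‖ ≤ (2‖W‖/Δ + ‖W‖²/Δ²)‖S‖`. -/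
theorem int_by_parts_trick
    {E : Type*} [NormedAddCommGroup E] [InnerProductSpace ℂ E] [FiniteDimensional ℂ E]
    (H₀ W P₀ R₀ S : E →L[ℂ] E) (Δ : ℝ) (hΔ : 0 < Δ)
    (hH₀ : IsSelfAdjoint H₀) (hW : IsSelfAdjoint W)
    (hP₀sa : IsSelfAdjoint P₀) (hP₀idem : P₀ * P₀ = P₀)
    (hP₀ker : ∀ x : E, H₀ x = 0 ↔ P₀ x = x)
    (hgap : ∀ μ ∈ spectrum ℂ H₀, μ ≠ 0 → Δ ≤ ‖μ‖)
    (hR₀ : R₀ = (1 - P₀) * R₀ * (1 - P₀))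
    (hR₀H₀ : R₀ * H₀ = 1 - P₀) (hH₀R₀ : H₀ * R₀ = 1 - P₀)
    (hS : S = (1 - P₀) * S * P₀) :
    let H := H₀ + W
    let Heff := P₀ * W * P₀ - P₀ * W * R₀ * W * P₀
    let Stilde := -((1 - P₀) * W * R₀ * S) + R₀ * S * W * P₀ - R₀ * S * W * R₀ * W * P₀
    (Stilde = (1 - P₀) * Stilde * P₀) ∧
    (‖Stilde‖ ≤ (2 * ‖W‖ / Δ + ‖W‖ ^ 2 / Δ ^ 2) * ‖S‖) ∧
    (∀ t : ℝ,
      (∫ τ in (0:ℝ)..t, NormedSpace.exp ((Complex.I * (τ : ℂ)) • H) * S *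
          NormedSpace.exp ((-(Complex.I) * (τ : ℂ)) • Heff))
      = -(Complex.I) •
          (NormedSpace.exp ((Complex.I * (t : ℂ)) • H) * (R₀ * S) *
              NormedSpace.exp ((-(Complex.I) * (t : ℂ)) • Heff)
            - R₀ * S)
        - (∫ τ in (0:ℝ)..t, NormedSpace.exp ((Complex.I * (τ : ℂ)) • H) *
            (P₀ * W * R₀ * S) * NormedSpace.exp ((-(Complex.I) * (τ : ℂ)) • Heff))
        + (∫ τ in (0:ℝ)..t, NormedSpace.exp ((Complex.I * (τ : ℂ)) • H) * Stilde *
            NormedSpace.exp ((-(Complex.I) * (τ : ℂ)) • Heff))) :=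
  int_by_parts_trick_general H₀ W P₀ R₀ S Δ hΔ hH₀ hP₀sa hP₀idem hP₀ker hgap hR₀ hH₀R₀ hS
end

section
/- Let g_x, g_z be nonzero reals with |g_x| ≠ |g_z| and let H_pen = g_x X₁X₂ + g_z Z₁Z₂ + g_x X₃X₄ + g_z Z₃Z₄ act on four qubits. Then the zero-eigenvalue eigenspace of H_pen is exactly 4-dimensional and is spanned by the states |φ_{s,t}⟩₁₂ ⊗ |φ_{−s,−t}⟩₃₄ for s,t ∈ {−1,1}. -/
open Matrix Kronecker

noncomputable section

def PauliX : Matrix (Fin 2) (Fin 2) ℂ := !![0, 1; 1, 0]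
def PauliY : Matrix (Fin 2) (Fin 2) ℂ := !![0, -Complex.I; Complex.I, 0]
def PauliZ : Matrix (Fin 2) (Fin 2) ℂ := !![1, 0; 0, -1]

/-- The Bell state `|φ_{s,t}⟩` for `s, t ∈ {-1, 1}`, the simultaneous eigenvector of
`Z⊗Z` and `X⊗X` with eigenvalues `s` and `t` respectively. -/
def bell (s t : ℤ) : Fin 2 × Fin 2 → ℂ := fun p =>
  (Real.sqrt 2 : ℂ)⁻¹ *
    (if p.2 = (if s = 1 then p.1 else p.1 + 1) then (if p.1 = 0 then 1 else (t : ℂ)) else 0)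

/-- The single-qubit operator `A` acting on qubit `i` of a register of qubits
indexed by `ι` (identity on all other qubits). -/
def pauliAt {ι : Type*} [Fintype ι] [DecidableEq ι] (A : Matrix (Fin 2) (Fin 2) ℂ)
    (i : ι) : Matrix (ι → Fin 2) (ι → Fin 2) ℂ :=
  fun f g => A (f i) (g i) * ∏ j ∈ Finset.univ.erase i, (if f j = g j then 1 else 0)

/-- The 4-qubit penalty Hamiltonian
`H_pen = g_x X₁X₂ + g_z Z₁Z₂ + g_x X₃X₄ + g_z Z₃Z₄`. -/
def Hpen4 (gx gz : ℝ) : Matrix (Fin 4 → Fin 2) (Fin 4 → Fin 2) ℂ :=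
  (gx : ℂ) • (pauliAt PauliX 0 * pauliAt PauliX 1) +
  (gz : ℂ) • (pauliAt PauliZ 0 * pauliAt PauliZ 1) +
  (gx : ℂ) • (pauliAt PauliX 2 * pauliAt PauliX 3) +
  (gz : ℂ) • (pauliAt PauliZ 2 * pauliAt PauliZ 3)

/-- The codeword `|φ_{s,t}⟩₁₂ ⊗ |φ_{−s,−t}⟩₃₄` of the [[4,2,2]] Hamiltonian code. -/
def cw (s t : ℤ) : (Fin 4 → Fin 2) → ℂ := fun f =>
  bell s t (f 0, f 1) * bell (-s) (-t) (f 2, f 3)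

/-- The set of the four codewords of the [[4,2,2]] Hamiltonian code. -/
def codewords : Set ((Fin 4 → Fin 2) → ℂ) :=
  {v | ∃ s t : ℤ, (s = 1 ∨ s = -1) ∧ (t = 1 ∨ t = -1) ∧ v = cw s t}

/-! The sixteen states `|φ_{s,t}⟩₁₂ ⊗ |φ_{s',t'}⟩₃₄` are orthonormal for the bilinear dot product,
hence form a basis of the 16-dimensional space, and each is an eigenvector of `H_pen` with
eigenvalue `g_z (s + s') + g_x (t + t')`, since `Z⊗Z` and `X⊗X` act on `|φ_{s,t}⟩` by `s` and `t`.
For `g_x, g_z ≠ 0` and `|g_x| ≠ |g_z|` this eigenvalue vanishes exactly when `(s', t') = (-s, -t)`,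
so the kernel is spanned by the four codewords, which are linearly independent. -/

theorem Module.Basis.ker_eq_span_image_of_apply_eq_smul {ι R M : Type*} [Fintype ι]
    [Semiring R] [NoZeroDivisors R] [AddCommMonoid M] [Module R M] (b : Module.Basis ι R M)
    (T : Module.End R M) (μ : ι → R) (hT : ∀ i, T (b i) = μ i • b i) :
    LinearMap.ker T = Submodule.span R (b '' {i | μ i = 0}) := by
  apply le_antisymm
  · intro v hv
    have hTv : T v = ∑ i, (b.repr v i * μ i) • b i := by
      conv_lhs => rw [← b.sum_repr v]
      simp only [map_sum, map_smul, hT, mul_smul]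
    have hcoeff (i : ι) : b.repr v i * μ i = 0 := by
      have h0 := b.repr_sum_self fun i => b.repr v i * μ i
      rw [← hTv, LinearMap.mem_ker.mp hv, map_zero] at h0
      simpa using (congrFun h0 i).symm
    rw [← b.sum_repr v]
    refine Submodule.sum_mem _ fun i _ => ?_
    rcases mul_eq_zero.mp (hcoeff i) with h | h
    · simp [h]
    · exact Submodule.smul_mem _ _ (Submodule.subset_span ⟨i, h, rfl⟩)
  · rw [Submodule.span_le]
    rintro _ ⟨i, hi, rfl⟩
    simp [hT, show μ i = 0 from hi]

theorem linearIndependent_of_dotProduct_eq_ite {ι n R : Type*} [Fintype n] [DecidableEq ι]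
    [CommRing R] (u : ι → n → R) (h : ∀ i j, u i ⬝ᵥ u j = if i = j then 1 else 0) :
    LinearIndependent R u := by
  rw [linearIndependent_iff']
  intro s c hc i hi
  have := congrArg (· ⬝ᵥ u i) hc
  simp only [sum_dotProduct, smul_dotProduct, h, zero_dotProduct, smul_eq_mul, mul_ite, mul_one,
    mul_zero, Finset.sum_ite_eq', if_pos hi] at this
  exact this

theorem pauliAt_mulVec_apply {ι : Type*} [Fintype ι] [DecidableEq ι]
    (A : Matrix (Fin 2) (Fin 2) ℂ) (i : ι) (v : (ι → Fin 2) → ℂ) (f : ι → Fin 2) :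
    (pauliAt A i *ᵥ v) f = ∑ a, A (f i) a * v (Function.update f i a) := by
  have hdelta (g : ι → Fin 2) :
      ∏ j ∈ Finset.univ.erase i, (if f j = g j then (1 : ℂ) else 0) =
        if g = Function.update f i (g i) then 1 else 0 := by
    rw [Finset.prod_boole]
    simp [Function.eq_update_iff, eq_comm]
  have himage : Finset.univ.image (Function.update f i) =
      Finset.univ.filter fun g => g = Function.update f i (g i) := by
    ext g
    simp only [Finset.mem_image, Finset.mem_univ, true_and, Finset.mem_filter]
    exact ⟨by rintro ⟨a, rfl⟩; simp, fun h => ⟨g i, h.symm⟩⟩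
  simp only [mulVec, dotProduct, pauliAt, hdelta, mul_ite, mul_one, mul_zero, ite_mul, zero_mul]
  rw [← Finset.sum_filter, ← himage, Finset.sum_image fun a _ b _ h =>
    Function.update_injective f i h]
  simp

theorem bell_dotProduct_bell (s t s' t' : ℤˣ) :
    bell s t ⬝ᵥ bell s' t' = if (s, t) = (s', t') then 1 else 0 := by
  have hsqrt : (Real.sqrt 2 : ℂ)⁻¹ * (Real.sqrt 2 : ℂ)⁻¹ = 1 / 2 := by
    rw [← mul_inv, ← Complex.ofReal_mul, Real.mul_self_sqrt zero_le_two]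
    norm_num
  rcases Int.units_eq_one_or s with rfl | rfl <;> rcases Int.units_eq_one_or t with rfl | rfl <;>
    rcases Int.units_eq_one_or s' with rfl | rfl <;>
    rcases Int.units_eq_one_or t' with rfl | rfl <;>
    simp [dotProduct, Fintype.sum_prod_type, bell, hsqrt] <;> norm_num

theorem kronecker_pauliX_mulVec_bell (s t : ℤˣ) :
    (PauliX ⊗ₖ PauliX) *ᵥ bell s t = (t : ℂ) • bell s t := by
  ext ⟨p, q⟩
  rcases Int.units_eq_one_or s with rfl | rfl <;> rcases Int.units_eq_one_or t with rfl | rfl <;>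
    fin_cases p <;> fin_cases q <;>
    simp [mulVec, dotProduct, Fintype.sum_prod_type, bell, PauliX]

theorem kronecker_pauliZ_mulVec_bell (s t : ℤˣ) :
    (PauliZ ⊗ₖ PauliZ) *ᵥ bell s t = (s : ℂ) • bell s t := by
  ext ⟨p, q⟩
  rcases Int.units_eq_one_or s with rfl | rfl <;> rcases Int.units_eq_one_or t with rfl | rfl <;>
    fin_cases p <;> fin_cases q <;>
    simp [mulVec, dotProduct, Fintype.sum_prod_type, bell, PauliZ]

def tensorPairs (u w : Fin 2 × Fin 2 → ℂ) : (Fin 4 → Fin 2) → ℂ :=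
  fun f => u (f 0, f 1) * w (f 2, f 3)

theorem tensorPairs_smul_left (c : ℂ) (u w : Fin 2 × Fin 2 → ℂ) :
    tensorPairs (c • u) w = c • tensorPairs u w := by
  ext f; simp [tensorPairs, mul_assoc]

theorem tensorPairs_smul_right (c : ℂ) (u w : Fin 2 × Fin 2 → ℂ) :
    tensorPairs u (c • w) = c • tensorPairs u w := by
  ext f; simp [tensorPairs, mul_left_comm]

def qubitPairs : (Fin 4 → Fin 2) ≃ (Fin 2 × Fin 2) × (Fin 2 × Fin 2) where
  toFun f := ((f 0, f 1), (f 2, f 3))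
  invFun p := ![p.1.1, p.1.2, p.2.1, p.2.2]
  left_inv f := by ext i; fin_cases i <;> rfl
  right_inv p := rfl

theorem tensorPairs_dotProduct (u w u' w' : Fin 2 × Fin 2 → ℂ) :
    tensorPairs u w ⬝ᵥ tensorPairs u' w' = (u ⬝ᵥ u') * (w ⬝ᵥ w') := by
  simp only [dotProduct, Finset.sum_mul_sum, ← Fintype.sum_prod_type',
    ← qubitPairs.symm.sum_comp]
  exact Fintype.sum_congr _ _ fun p =>
    show u p.1 * w p.2 * (u' p.1 * w' p.2) = _ by ring

theorem pauliAt_mul_pauliAt_mulVec_tensorPairs_left (A B : Matrix (Fin 2) (Fin 2) ℂ)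
    (u w : Fin 2 × Fin 2 → ℂ) :
    (pauliAt A 0 * pauliAt B 1) *ᵥ tensorPairs u w = tensorPairs ((A ⊗ₖ B) *ᵥ u) w := by
  ext f
  simp only [← mulVec_mulVec, pauliAt_mulVec_apply]
  simp [tensorPairs, mulVec, dotProduct, Fintype.sum_prod_type]
  ring

theorem pauliAt_mul_pauliAt_mulVec_tensorPairs_right (A B : Matrix (Fin 2) (Fin 2) ℂ)
    (u w : Fin 2 × Fin 2 → ℂ) :
    (pauliAt A 2 * pauliAt B 3) *ᵥ tensorPairs u w = tensorPairs u ((A ⊗ₖ B) *ᵥ w) := by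
  ext f
  simp only [← mulVec_mulVec, pauliAt_mulVec_apply]
  simp [tensorPairs, mulVec, dotProduct, Fintype.sum_prod_type]
  ring

/-- `((s, t), (s', t'))` indexes `|φ_{s,t}⟩₁₂ ⊗ |φ_{s',t'}⟩₃₄`, the signs ranging over `ℤˣ = {±1}`. -/
def bellPair (i : (ℤˣ × ℤˣ) × (ℤˣ × ℤˣ)) : (Fin 4 → Fin 2) → ℂ :=
  tensorPairs (bell i.1.1 i.1.2) (bell i.2.1 i.2.2)

def bellPairEnergy (gx gz : ℝ) (i : (ℤˣ × ℤˣ) × (ℤˣ × ℤˣ)) : ℂ :=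
  gz * ((i.1.1 : ℤ) + (i.2.1 : ℤ) : ℤ) + gx * ((i.1.2 : ℤ) + (i.2.2 : ℤ) : ℤ)

theorem Hpen4_mulVec_bellPair (gx gz : ℝ) (i : (ℤˣ × ℤˣ) × (ℤˣ × ℤˣ)) :
    Hpen4 gx gz *ᵥ bellPair i = bellPairEnergy gx gz i • bellPair i := by
  simp only [Hpen4, bellPair, add_mulVec, smul_mulVec, pauliAt_mul_pauliAt_mulVec_tensorPairs_left,
    pauliAt_mul_pauliAt_mulVec_tensorPairs_right, kronecker_pauliX_mulVec_bell,
    kronecker_pauliZ_mulVec_bell, tensorPairs_smul_left, tensorPairs_smul_right, bellPairEnergy]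
  push_cast
  module

theorem bellPair_dotProduct_bellPair (i j : (ℤˣ × ℤˣ) × (ℤˣ × ℤˣ)) :
    bellPair i ⬝ᵥ bellPair j = if i = j then 1 else 0 := by
  simp only [bellPair, tensorPairs_dotProduct, bell_dotProduct_bell, Prod.ext_iff]
  split_ifs <;> simp_all

def bellPairBasis : Module.Basis ((ℤˣ × ℤˣ) × (ℤˣ × ℤˣ)) ℂ ((Fin 4 → Fin 2) → ℂ) :=
  basisOfLinearIndependentOfCardEqFinrank
    (linearIndependent_of_dotProduct_eq_ite bellPair bellPair_dotProduct_bellPair)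
    (by simp [Module.finrank_fintype_fun_eq_card])

theorem coe_bellPairBasis : ⇑bellPairBasis = bellPair :=
  coe_basisOfLinearIndependentOfCardEqFinrank _ _

theorem bellPairEnergy_eq_zero_iff {gx gz : ℝ} (hgx : gx ≠ 0) (hgz : gz ≠ 0) (hne : |gx| ≠ |gz|)
    (i : (ℤˣ × ℤˣ) × (ℤˣ × ℤˣ)) : bellPairEnergy gx gz i = 0 ↔ i.2 = -i.1 := by
  obtain ⟨⟨s, t⟩, s', t'⟩ := i
  have hreal : bellPairEnergy gx gz ((s, t), s', t') =
      ((gz * ((s : ℤ) + (s' : ℤ) : ℤ) + gx * ((t : ℤ) + (t' : ℤ) : ℤ) : ℝ) : ℂ) := by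
    simp [bellPairEnergy]
  rw [hreal, Complex.ofReal_eq_zero]
  rcases Int.units_eq_one_or s with rfl | rfl <;> rcases Int.units_eq_one_or t with rfl | rfl <;>
    rcases Int.units_eq_one_or s' with rfl | rfl <;>
    rcases Int.units_eq_one_or t' with rfl | rfl <;>
    norm_num [Prod.ext_iff, hgx, hgz] <;>
    exact fun h => hne (abs_eq_abs.mpr (by first | (left; linarith) | (right; linarith)))

theorem cw_eq_bellPair (s t : ℤˣ) : cw s t = bellPair ((s, t), -(s, t)) := by
  ext f
  simp [cw, bellPair, tensorPairs]

theorem codewords_eq_range : codewords = Set.range fun p : ℤˣ × ℤˣ => bellPair (p, -p) := by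
  ext v
  constructor
  · rintro ⟨s, t, hs, ht, rfl⟩
    obtain ⟨s, rfl⟩ := Int.isUnit_iff.mpr hs
    obtain ⟨t, rfl⟩ := Int.isUnit_iff.mpr ht
    exact ⟨(s, t), (cw_eq_bellPair s t).symm⟩
  · rintro ⟨⟨s, t⟩, rfl⟩
    exact ⟨s, t, Int.isUnit_iff.mp s.isUnit, Int.isUnit_iff.mp t.isUnit,
      cw_eq_bellPair s t⟩

/-- The zero-eigenvalue eigenspace of the 4-qubit penalty Hamiltonian is exactly the
span of the four codewords `|φ_{s,t}⟩₁₂ ⊗ |φ_{−s,−t}⟩₃₄`, and is 4-dimensional. -/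
theorem hpen4_kernel (gx gz : ℝ) (hgx : gx ≠ 0) (hgz : gz ≠ 0) (hne : |gx| ≠ |gz|) :
    LinearMap.ker (Hpen4 gx gz).mulVecLin = Submodule.span ℂ codewords ∧
    Module.finrank ℂ (LinearMap.ker (Hpen4 gx gz).mulVecLin) = 4 := by
  have hzero : {i | bellPairEnergy gx gz i = 0} = Set.range fun p : ℤˣ × ℤˣ => (p, -p) := by
    ext ⟨p, q⟩
    simp [bellPairEnergy_eq_zero_iff hgx hgz hne, eq_comm]
  have hker : LinearMap.ker (Hpen4 gx gz).mulVecLin = Submodule.span ℂ codewords := by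
    rw [bellPairBasis.ker_eq_span_image_of_apply_eq_smul _ (bellPairEnergy gx gz)
      fun i => by simp [coe_bellPairBasis, Hpen4_mulVec_bellPair], hzero, ← Set.range_comp,
      coe_bellPairBasis, codewords_eq_range]
    rfl
  refine ⟨hker, ?_⟩
  have hli : LinearIndependent ℂ fun p : ℤˣ × ℤˣ => bellPair (p, -p) :=
    coe_bellPairBasis ▸ bellPairBasis.linearIndependent.comp _ fun p q h => congrArg Prod.fst h
  rw [hker, codewords_eq_range, finrank_span_eq_card hli]
  rfl

end
end

section
/- Let S_enc be the 4-dimensional zero-eigenspace of H_pen = g_x X₁X₂ + g_z Z₁Z₂ + g_x X₃X₄ + g_z Z₃Z₄ (with g_x, g_z nonzero and |g_x| ≠ |g_z|), with projector P_enc. Then for every single-qubit Pauli operator V (i.e., X_i, Y_i, or Z_i for i ∈ {1,2,3,4}), P_enc V P_enc = 0. In particular, S_enc is a quantum error-detecting code of distance 2. -/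
open Matrix Kronecker

noncomputable section

-- ============ auxiliary integer-level development ============
namespace Code422Aux

abbrev V := Fin 4 → Fin 2
abbrev Idx := (Fin 2 × Fin 2) × (Fin 2 × Fin 2)

def sg : Fin 2 → ℤ := ![1, -1]

def bb (a b : Fin 2) (x y : Fin 2) : ℤ :=
  if y = x + a then (if x = 0 then 1 else sg b) else 0

def eZ (k : Idx) (f : V) : ℤ :=
  bb k.1.1 k.1.2 (f 0) (f 1) * bb k.2.1 k.2.2 (f 2) (f 3)

def Xm : Matrix (Fin 2) (Fin 2) ℤ := !![0, 1; 1, 0]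
def Zm : Matrix (Fin 2) (Fin 2) ℤ := !![1, 0; 0, -1]
def Wm : Matrix (Fin 2) (Fin 2) ℤ := !![0, 1; -1, 0]

def pAZ (A : Matrix (Fin 2) (Fin 2) ℤ) (i : Fin 4) : Matrix V V ℤ :=
  fun f g => A (f i) (g i) * ∏ j ∈ Finset.univ.erase i, (if f j = g j then 1 else 0)

def XX12 : Matrix V V ℤ := pAZ Xm 0 * pAZ Xm 1
def ZZ12 : Matrix V V ℤ := pAZ Zm 0 * pAZ Zm 1
def XX34 : Matrix V V ℤ := pAZ Xm 2 * pAZ Xm 3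
def ZZ34 : Matrix V V ℤ := pAZ Zm 2 * pAZ Zm 3

def codeIdx (k : Idx) : Prop := k.2.1 = k.1.1 + 1 ∧ k.2.2 = k.1.2 + 1

instance : DecidablePred codeIdx := fun _ => inferInstanceAs (Decidable (_ ∧ _))

def brakZ (A : Matrix (Fin 2) (Fin 2) ℤ) (i : Fin 4) (k l : Idx) : ℤ :=
  ∑ f : V, ∑ g : V, eZ k f * (pAZ A i f g * eZ l g)

-- ======= decidable facts (integer arithmetic) =======
lemma d_complete : ∀ f g : V, (∑ k : Idx, eZ k f * eZ k g) = if f = g then 4 else 0 := by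
  decide
lemma d_vm_XX12 : ∀ k : Idx, ∀ g : V, (∑ f : V, eZ k f * XX12 f g) = sg k.1.2 * eZ k g := by
  decide
lemma d_vm_ZZ12 : ∀ k : Idx, ∀ g : V, (∑ f : V, eZ k f * ZZ12 f g) = sg k.1.1 * eZ k g := by
  decide
lemma d_vm_XX34 : ∀ k : Idx, ∀ g : V, (∑ f : V, eZ k f * XX34 f g) = sg k.2.2 * eZ k g := by
  decide
lemma d_vm_ZZ34 : ∀ k : Idx, ∀ g : V, (∑ f : V, eZ k f * ZZ34 f g) = sg k.2.1 * eZ k g := by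
  decide
set_option maxHeartbeats 4000000 in
lemma d_brak : ∀ i : Fin 4, ∀ k l : Idx, codeIdx k → codeIdx l →
    brakZ Xm i k l = 0 ∧ brakZ Zm i k l = 0 ∧ brakZ Wm i k l = 0 := by
  decide

-- ======= complex-level objects =======
def eC (k : Idx) : V → ℂ := fun f => ((eZ k f : ℤ) : ℂ)

lemma pauliAt_cast (A : Matrix (Fin 2) (Fin 2) ℤ) (i : Fin 4) :
    pauliAt (A.map (Int.cast : ℤ → ℂ)) i = (pAZ A i).map (Int.cast : ℤ → ℂ) := by
  ext f g
  simp only [pauliAt, pAZ, Matrix.map_apply]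
  push_cast [apply_ite (Int.cast : ℤ → ℂ)]
  ring

lemma pauliX_cast : PauliX = Xm.map (Int.cast : ℤ → ℂ) := by
  ext a b; fin_cases a <;> fin_cases b <;> simp [PauliX, Xm]

lemma pauliZ_cast : PauliZ = Zm.map (Int.cast : ℤ → ℂ) := by
  ext a b; fin_cases a <;> fin_cases b <;> simp [PauliZ, Zm]

lemma pauliY_cast : PauliY = (-Complex.I) • (Wm.map (Int.cast : ℤ → ℂ)) := by
  ext a b; fin_cases a <;> fin_cases b <;> simp [PauliY, Wm]

lemma map_mul_int (M N : Matrix V V ℤ) :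
    (M * N).map (Int.cast : ℤ → ℂ) = M.map (Int.cast : ℤ → ℂ) * N.map (Int.cast : ℤ → ℂ) := by
  have := Matrix.map_mul (L := M) (M := N) (f := Int.castRingHom ℂ)
  simpa using this

lemma H_apply (gx gz : ℝ) (f g : V) :
    Hpen4 gx gz f g = (gx : ℂ) * ((XX12 f g : ℤ) : ℂ) + (gz : ℂ) * ((ZZ12 f g : ℤ) : ℂ)
      + (gx : ℂ) * ((XX34 f g : ℤ) : ℂ) + (gz : ℂ) * ((ZZ34 f g : ℤ) : ℂ) := by
  have hx0 : pauliAt PauliX 0 * pauliAt PauliX 1 = XX12.map (Int.cast : ℤ → ℂ) := by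
    rw [pauliX_cast, pauliAt_cast, pauliAt_cast, XX12, map_mul_int]
  have hz0 : pauliAt PauliZ 0 * pauliAt PauliZ 1 = ZZ12.map (Int.cast : ℤ → ℂ) := by
    rw [pauliZ_cast, pauliAt_cast, pauliAt_cast, ZZ12, map_mul_int]
  have hx2 : pauliAt PauliX 2 * pauliAt PauliX 3 = XX34.map (Int.cast : ℤ → ℂ) := by
    rw [pauliX_cast, pauliAt_cast, pauliAt_cast, XX34, map_mul_int]
  have hz2 : pauliAt PauliZ 2 * pauliAt PauliZ 3 = ZZ34.map (Int.cast : ℤ → ℂ) := by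
    rw [pauliZ_cast, pauliAt_cast, pauliAt_cast, ZZ34, map_mul_int]
  simp only [Hpen4, hx0, hz0, hx2, hz2, Matrix.add_apply, Matrix.smul_apply, Matrix.map_apply,
    smul_eq_mul]

def lamR (gx gz : ℝ) (k : Idx) : ℝ :=
  gx * ((sg k.1.2 : ℤ) + (sg k.2.2 : ℤ)) + gz * ((sg k.1.1 : ℤ) + (sg k.2.1 : ℤ))

lemma vecMul_H (gx gz : ℝ) (k : Idx) (g : V) :
    ∑ f : V, eC k f * Hpen4 gx gz f g = ((lamR gx gz k : ℝ) : ℂ) * eC k g := by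
  have h1 : ∑ f : V, eC k f * ((XX12 f g : ℤ) : ℂ) = ((sg k.1.2 : ℤ) : ℂ) * eC k g := by
    have h := congrArg (fun z : ℤ => (z : ℂ)) (d_vm_XX12 k g)
    push_cast at h
    simpa [eC] using h
  have h2 : ∑ f : V, eC k f * ((ZZ12 f g : ℤ) : ℂ) = ((sg k.1.1 : ℤ) : ℂ) * eC k g := by
    have h := congrArg (fun z : ℤ => (z : ℂ)) (d_vm_ZZ12 k g)
    push_cast at h
    simpa [eC] using h
  have h3 : ∑ f : V, eC k f * ((XX34 f g : ℤ) : ℂ) = ((sg k.2.2 : ℤ) : ℂ) * eC k g := by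
    have h := congrArg (fun z : ℤ => (z : ℂ)) (d_vm_XX34 k g)
    push_cast at h
    simpa [eC] using h
  have h4 : ∑ f : V, eC k f * ((ZZ34 f g : ℤ) : ℂ) = ((sg k.2.1 : ℤ) : ℂ) * eC k g := by
    have h := congrArg (fun z : ℤ => (z : ℂ)) (d_vm_ZZ34 k g)
    push_cast at h
    simpa [eC] using h
  calc ∑ f : V, eC k f * Hpen4 gx gz f g
      = ∑ f : V, ((gx : ℂ) * (eC k f * ((XX12 f g : ℤ) : ℂ))
          + (gz : ℂ) * (eC k f * ((ZZ12 f g : ℤ) : ℂ))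
          + (gx : ℂ) * (eC k f * ((XX34 f g : ℤ) : ℂ))
          + (gz : ℂ) * (eC k f * ((ZZ34 f g : ℤ) : ℂ))) := by
        refine Finset.sum_congr rfl fun f _ => ?_
        rw [H_apply]; ring
    _ = (gx : ℂ) * (∑ f : V, eC k f * ((XX12 f g : ℤ) : ℂ))
          + (gz : ℂ) * (∑ f : V, eC k f * ((ZZ12 f g : ℤ) : ℂ))
          + (gx : ℂ) * (∑ f : V, eC k f * ((XX34 f g : ℤ) : ℂ))
          + (gz : ℂ) * (∑ f : V, eC k f * ((ZZ34 f g : ℤ) : ℂ)) := by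
        simp [Finset.sum_add_distrib, Finset.mul_sum]
    _ = ((lamR gx gz k : ℝ) : ℂ) * eC k g := by
        rw [h1, h2, h3, h4]; unfold lamR; push_cast; ring

lemma lamR_ne (gx gz : ℝ) (hgx : gx ≠ 0) (hgz : gz ≠ 0) (hne : |gx| ≠ |gz|)
    (k : Idx) (hk : ¬ codeIdx k) : lamR gx gz k ≠ 0 := by
  have hpm : gx + gz ≠ 0 := fun h => hne (by rw [show gx = -gz by linarith]; simp [abs_neg])
  have hmm : gx - gz ≠ 0 := fun h => hne (by rw [show gx = gz by linarith])
  obtain ⟨⟨a, b⟩, c, d⟩ := k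
  simp only [codeIdx, not_and_or] at hk
  fin_cases a <;> fin_cases b <;> fin_cases c <;> fin_cases d <;>
    simp_all [lamR, sg] <;>
    first
      | (intro h0; exact hgx (by linarith))
      | (intro h0; exact hgz (by linarith))
      | (intro h0; exact hpm (by linarith))
      | (intro h0; exact hmm (by linarith))

-- projector onto the code span
def codeset : Finset Idx := Finset.univ.filter codeIdx

def Q : Matrix V V ℂ := fun f g => (4 : ℂ)⁻¹ * ∑ k ∈ codeset, eC k f * eC k g

lemma complete_C (f g : V) :
    (∑ k : Idx, eC k f * eC k g) = if f = g then (4 : ℂ) else 0 := by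
  have := d_complete f g
  have h2 := congrArg (fun z : ℤ => (z : ℂ)) this
  push_cast [apply_ite (Int.cast : ℤ → ℂ)] at h2
  simpa [eC] using h2

lemma Q_fixes (gx gz : ℝ) (hgx : gx ≠ 0) (hgz : gz ≠ 0) (hne : |gx| ≠ |gz|)
    (w : V → ℂ) (hw : (Hpen4 gx gz).mulVec w = 0) : Q.mulVec w = w := by
  -- coefficients
  set c : Idx → ℂ := fun k => ∑ g : V, eC k g * w g with hc
  have hcoef : ∀ k : Idx, ¬ codeIdx k → c k = 0 := by
    intro k hk
    have h0 : ∑ f : V, eC k f * ((Hpen4 gx gz).mulVec w f) = 0 := by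
      simp [hw]
    have h1 : ∑ f : V, eC k f * ((Hpen4 gx gz).mulVec w f)
        = ((lamR gx gz k : ℝ) : ℂ) * c k := by
      calc ∑ f : V, eC k f * ((Hpen4 gx gz).mulVec w f)
          = ∑ f : V, ∑ g : V, eC k f * (Hpen4 gx gz f g * w g) := by
            refine Finset.sum_congr rfl fun f _ => ?_
            simp [Matrix.mulVec, dotProduct, Finset.mul_sum]
        _ = ∑ g : V, ∑ f : V, eC k f * (Hpen4 gx gz f g * w g) := Finset.sum_comm
        _ = ∑ g : V, (∑ f : V, eC k f * Hpen4 gx gz f g) * w g := by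
            refine Finset.sum_congr rfl fun g _ => ?_
            rw [Finset.sum_mul]; refine Finset.sum_congr rfl fun f _ => by ring
        _ = ∑ g : V, ((lamR gx gz k : ℝ) : ℂ) * (eC k g * w g) := by
            refine Finset.sum_congr rfl fun g _ => ?_
            rw [vecMul_H]; ring
        _ = ((lamR gx gz k : ℝ) : ℂ) * c k := by rw [← Finset.mul_sum]
    have hlam : ((lamR gx gz k : ℝ) : ℂ) ≠ 0 := by
      exact_mod_cast lamR_ne gx gz hgx hgz hne k hk
    have := h1 ▸ h0
    exact (mul_eq_zero.mp this).resolve_left hlam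
  funext f
  have key : ∀ S : Finset Idx, ∑ k ∈ S, eC k f * c k
      = ∑ k ∈ S, (∑ g : V, eC k f * (eC k g * w g)) := by
    intro S
    refine Finset.sum_congr rfl fun k _ => ?_
    rw [hc]; simp [Finset.mul_sum, mul_assoc]
  have hfull : ∑ k : Idx, eC k f * c k = 4 * w f := by
    rw [key]
    calc ∑ k : Idx, ∑ g : V, eC k f * (eC k g * w g)
        = ∑ g : V, ∑ k : Idx, eC k f * (eC k g * w g) := Finset.sum_comm
      _ = ∑ g : V, (∑ k : Idx, eC k f * eC k g) * w g := by
          refine Finset.sum_congr rfl fun g _ => ?_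
          rw [Finset.sum_mul]; refine Finset.sum_congr rfl fun k _ => by ring
      _ = ∑ g : V, (if f = g then (4:ℂ) else 0) * w g := by
          refine Finset.sum_congr rfl fun g _ => by rw [complete_C]
      _ = 4 * w f := by simp [ite_mul]
  have hcodesum : ∑ k ∈ codeset, eC k f * c k = ∑ k : Idx, eC k f * c k := by
    rw [codeset, Finset.sum_filter]
    refine Finset.sum_congr rfl fun k _ => ?_
    by_cases h : codeIdx k
    · simp [h]
    · simp [h, hcoef k h]
  have hQ : Q.mulVec w f = (4:ℂ)⁻¹ * ∑ k ∈ codeset, ∑ g : V, eC k f * (eC k g * w g) := by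
    calc Q.mulVec w f = ∑ g : V, ((4:ℂ)⁻¹ * ∑ k ∈ codeset, eC k f * eC k g) * w g := by
          simp [Matrix.mulVec, dotProduct, Q]
      _ = (4:ℂ)⁻¹ * ∑ g : V, ∑ k ∈ codeset, eC k f * (eC k g * w g) := by
          rw [Finset.mul_sum]
          refine Finset.sum_congr rfl fun g _ => ?_
          rw [mul_assoc, Finset.sum_mul]
          exact congrArg _ (Finset.sum_congr rfl fun k _ => mul_assoc _ _ _)
      _ = (4:ℂ)⁻¹ * ∑ k ∈ codeset, ∑ g : V, eC k f * (eC k g * w g) := by rw [Finset.sum_comm]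
  rw [hQ, ← key, hcodesum, hfull, ← mul_assoc]
  norm_num


lemma sandwich_zero (M : Matrix V V ℂ)
    (hb : ∀ k l : Idx, codeIdx k → codeIdx l →
      ∑ f : V, ∑ g : V, eC k f * (M f g * eC l g) = 0) :
    Q * M * Q = 0 := by
  have inner : ∀ g : V, ∀ k : Idx, codeIdx k → ∑ g1 : V, eC k g1 * (M * Q) g1 g = 0 := by
    intro g k hk
    have expand : ∑ g1 : V, eC k g1 * (M * Q) g1 g
        = ∑ l ∈ codeset, ∑ g1 : V, ∑ g2 : V,
            eC k g1 * (M g1 g2 * ((4:ℂ)⁻¹ * (eC l g2 * eC l g))) := by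
      calc ∑ g1 : V, eC k g1 * (M * Q) g1 g
          = ∑ g1 : V, ∑ g2 : V, ∑ l ∈ codeset,
              eC k g1 * (M g1 g2 * ((4:ℂ)⁻¹ * (eC l g2 * eC l g))) := by
            refine Finset.sum_congr rfl fun g1 _ => ?_
            rw [Matrix.mul_apply, Finset.mul_sum]
            refine Finset.sum_congr rfl fun g2 _ => ?_
            show eC k g1 * (M g1 g2 * ((4:ℂ)⁻¹ * ∑ l ∈ codeset, eC l g2 * eC l g)) = _
            rw [Finset.mul_sum, Finset.mul_sum, Finset.mul_sum]
        _ = ∑ g1 : V, ∑ l ∈ codeset, ∑ g2 : V,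
              eC k g1 * (M g1 g2 * ((4:ℂ)⁻¹ * (eC l g2 * eC l g))) := by
            exact Finset.sum_congr rfl fun g1 _ => Finset.sum_comm
        _ = ∑ l ∈ codeset, ∑ g1 : V, ∑ g2 : V,
              eC k g1 * (M g1 g2 * ((4:ℂ)⁻¹ * (eC l g2 * eC l g))) := Finset.sum_comm
    rw [expand]
    refine Finset.sum_eq_zero fun l hl => ?_
    have hl' : codeIdx l := (Finset.mem_filter.mp hl).2
    have : ∑ g1 : V, ∑ g2 : V, eC k g1 * (M g1 g2 * ((4:ℂ)⁻¹ * (eC l g2 * eC l g)))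
        = ((4:ℂ)⁻¹ * eC l g) * ∑ g1 : V, ∑ g2 : V, eC k g1 * (M g1 g2 * eC l g2) := by
      rw [Finset.mul_sum]
      refine Finset.sum_congr rfl fun g1 _ => ?_
      rw [Finset.mul_sum]
      exact Finset.sum_congr rfl fun g2 _ => by ring
    rw [this, hb k l hk hl', mul_zero]
  ext f g
  show (Q * M * Q) f g = 0
  have expand2 : (Q * M * Q) f g
      = ∑ k ∈ codeset, ((4:ℂ)⁻¹ * eC k f) * ∑ g1 : V, eC k g1 * (M * Q) g1 g := by
    calc (Q * M * Q) f g
        = ∑ g1 : V, Q f g1 * (M * Q) g1 g := by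
          rw [Matrix.mul_assoc, Matrix.mul_apply]
      _ = ∑ g1 : V, ∑ k ∈ codeset, ((4:ℂ)⁻¹ * eC k f) * (eC k g1 * (M * Q) g1 g) := by
          refine Finset.sum_congr rfl fun g1 _ => ?_
          show ((4:ℂ)⁻¹ * ∑ k ∈ codeset, eC k f * eC k g1) * (M * Q) g1 g = _
          rw [Finset.mul_sum, Finset.sum_mul]
          exact Finset.sum_congr rfl fun k _ => by ring
      _ = ∑ k ∈ codeset, ∑ g1 : V, ((4:ℂ)⁻¹ * eC k f) * (eC k g1 * (M * Q) g1 g) :=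
          Finset.sum_comm
      _ = ∑ k ∈ codeset, ((4:ℂ)⁻¹ * eC k f) * ∑ g1 : V, eC k g1 * (M * Q) g1 g := by
          refine Finset.sum_congr rfl fun k _ => ?_
          rw [Finset.mul_sum]
  rw [expand2]
  refine Finset.sum_eq_zero fun k hk => ?_
  rw [inner g k (Finset.mem_filter.mp hk).2, mul_zero]

lemma Q_herm : Q.conjTranspose = Q := by
  ext f g
  simp only [Matrix.conjTranspose_apply, Q, star_mul', star_sum, eC]
  congr 1
  · simp
  · refine Finset.sum_congr rfl fun k _ => ?_
    simp [mul_comm]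

lemma ext_mulVec {M N : Matrix V V ℂ} (h : ∀ v, M.mulVec v = N.mulVec v) : M = N := by
  ext f g
  have := congrFun (h (Pi.single g 1)) f
  simpa using this

lemma pauliAt_smul (c : ℂ) (B : Matrix (Fin 2) (Fin 2) ℂ) (i : Fin 4) (f g : V) :
    pauliAt (c • B) i f g = c * pauliAt B i f g := by
  simp [pauliAt, Matrix.smul_apply, smul_eq_mul, mul_assoc]

lemma QVQ (i : Fin 4) (A : Matrix (Fin 2) (Fin 2) ℂ)
    (hA : A = PauliX ∨ A = PauliY ∨ A = PauliZ) : Q * pauliAt A i * Q = 0 := by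
  have keyX : ∀ (B : Matrix (Fin 2) (Fin 2) ℤ),
      (∀ k l : Idx, codeIdx k → codeIdx l → brakZ B i k l = 0) →
      ∀ k l : Idx, codeIdx k → codeIdx l →
        ∑ f : V, ∑ g : V, eC k f * (pauliAt (B.map (Int.cast : ℤ → ℂ)) i f g * eC l g) = 0 := by
    intro B hB k l hk hl
    have hz := hB k l hk hl
    unfold brakZ at hz
    have h := congrArg (fun z : ℤ => (z : ℂ)) hz
    push_cast at h
    rw [pauliAt_cast]
    simpa [eC, Matrix.map_apply] using h
  rcases hA with rfl | rfl | rfl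
  · rw [pauliX_cast]
    exact sandwich_zero _ (keyX Xm (fun k l hk hl => (d_brak i k l hk hl).1))
  · rw [pauliY_cast]
    apply sandwich_zero
    intro k l hk hl
    have hw := keyX Wm (fun k l hk hl => (d_brak i k l hk hl).2.2) k l hk hl
    calc ∑ f : V, ∑ g : V,
          eC k f * (pauliAt ((-Complex.I) • Wm.map (Int.cast : ℤ → ℂ)) i f g * eC l g)
        = (-Complex.I) * ∑ f : V, ∑ g : V,
            eC k f * (pauliAt (Wm.map (Int.cast : ℤ → ℂ)) i f g * eC l g) := by
          rw [Finset.mul_sum]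
          refine Finset.sum_congr rfl fun f _ => ?_
          rw [Finset.mul_sum]
          refine Finset.sum_congr rfl fun g _ => ?_
          rw [pauliAt_smul]; ring
      _ = 0 := by rw [hw, mul_zero]
  · rw [pauliZ_cast]
    exact sandwich_zero _ (keyX Zm (fun k l hk hl => (d_brak i k l hk hl).2.1))

end Code422Aux

open Code422Aux in
/-- Error-detection of the [[4,2,2]] Hamiltonian code: if `P_enc` is the orthogonal
projector onto the zero-eigenspace of `H_pen`, then `P_enc V P_enc = 0` for every
single-qubit Pauli operator `V ∈ {Xᵢ, Yᵢ, Zᵢ}`; in particular the code has distance 2. -/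
theorem code422_detects_single_paulis (gx gz : ℝ) (hgx : gx ≠ 0) (hgz : gz ≠ 0)
    (hne : |gx| ≠ |gz|)
    (Penc : Matrix (Fin 4 → Fin 2) (Fin 4 → Fin 2) ℂ)
    (hsa : Penc.IsHermitian) (hidem : Penc * Penc = Penc)
    (hker : ∀ v : (Fin 4 → Fin 2) → ℂ, (Hpen4 gx gz).mulVec v = 0 ↔ Penc.mulVec v = v) :
    ∀ (i : Fin 4) (A : Matrix (Fin 2) (Fin 2) ℂ),
      A = PauliX ∨ A = PauliY ∨ A = PauliZ →
      Penc * pauliAt A i * Penc = 0 := by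
  intro i A hA
  have hQP : Q * Penc = Penc := by
    apply ext_mulVec
    intro v
    rw [← Matrix.mulVec_mulVec]
    apply Q_fixes gx gz hgx hgz hne
    apply (hker _).mpr
    rw [Matrix.mulVec_mulVec, hidem]
  have hPQ : Penc * Q = Penc := by
    have h1 := congrArg Matrix.conjTranspose hQP
    rwa [Matrix.conjTranspose_mul, Q_herm, hsa.eq] at h1
  have h0 : Q * pauliAt A i * Q = 0 := QVQ i A hA
  calc Penc * pauliAt A i * Penc
      = (Penc * Q) * pauliAt A i * (Q * Penc) := by rw [hPQ, hQP]
    _ = Penc * (Q * pauliAt A i * Q) * Penc := by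
        simp only [Matrix.mul_assoc]
    _ = 0 := by rw [h0, Matrix.mul_zero, Matrix.zero_mul]


end
end

section
/- Let H₀ be Hermitian with zero-eigenspace projector P₀ and pseudoinverse R₀, spectral gap Δ, and W Hermitian with κ = ‖W‖/Δ ≤ 1/4. Define recursively S⁽¹⁾ := −Q₀WR₀WP₀ + R₀WP₀WP₀ − R₀WP₀WR₀WP₀ and S⁽ℓ⁺¹⁾ := −Q₀WR₀S⁽ℓ⁾ + R₀S⁽ℓ⁾WP₀ − R₀S⁽ℓ⁾WR₀WP₀. Then for every ℓ ≥ 1, S⁽ℓ⁾ = Q₀S⁽ℓ⁾P₀ and ‖S⁽ℓ⁾‖ ≤ (2κ+κ²)^ℓ ‖Q₀WP₀‖; consequently the series Σ_{ℓ≥1} S⁽ℓ⁾ converges absolutely with ‖Σ_{ℓ=1}^∞ S⁽ℓ⁾‖ ≤ (2κ+κ²)/(1−2κ−κ²) ‖Q₀WP₀‖ ≤ (36/7)κ‖Q₀WP₀‖. -/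
/-! On the orthogonal complement of `ker H₀` every eigenvalue of `H₀` has modulus at least `Δ`,
so `‖R₀‖ ≤ 1/Δ`. The map `T ↦ -Q₀WR₀T + R₀TWP₀ - R₀TWR₀WP₀` sends operators of the form
`T = TP₀` to operators of the form `Q₀(·)P₀` (because `Q₀R₀ = R₀`), and, as `‖P₀‖, ‖Q₀‖ ≤ 1`,
multiplies norms by at most `2κ + κ²`. Since `S⁽¹⁾` is the image of `Q₀WP₀` and `S⁽ℓ⁺¹⁾` that of
`S⁽ℓ⁾`, the bounds follow by induction, and the series is dominated by a geometric one. -/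

open scoped InnerProductSpace

section SpectralGap

variable {𝕜 E : Type*} [RCLike 𝕜] [NormedAddCommGroup E] [InnerProductSpace 𝕜 E]
  [FiniteDimensional 𝕜 E] {H : E →L[𝕜] E} {Δ : ℝ}

theorem LinearMap.IsSymmetric.mul_norm_le_norm_apply_of_orthogonal_ker
    (hH : (H : E →ₗ[𝕜] E).IsSymmetric) (hΔ : 0 ≤ Δ)
    (hgap : ∀ μ ∈ spectrum 𝕜 H, μ ≠ 0 → Δ ≤ ‖μ‖) {y : E}
    (hy : ∀ z, H z = 0 → ⟪z, y⟫_𝕜 = 0) : Δ * ‖y‖ ≤ ‖H y‖ := by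
  have := FiniteDimensional.complete 𝕜 E
  have hn : Module.finrank 𝕜 E = Module.finrank 𝕜 E := rfl
  set b := hH.eigenvectorBasis hn
  set μ := hH.eigenvalues hn
  have hcoord : ∀ i, Δ * ‖b.repr y i‖ ≤ ‖b.repr (H y) i‖ := by
    intro i
    rw [show b.repr (H y) i = μ i * b.repr y i from hH.eigenvectorBasis_apply_self_apply hn y i,
      norm_mul, RCLike.norm_ofReal]
    by_cases hμ : μ i = 0
    · have : b.repr y i = 0 := by
        rw [b.repr_apply_apply]
        apply hy
        have hb : H (b i) = (μ i : 𝕜) • b i := hH.apply_eigenvectorBasis hn i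
        rw [hμ] at hb
        simpa using hb
      simp [this]
    · have hmem : (μ i : 𝕜) ∈ spectrum 𝕜 H := by
        rw [ContinuousLinearMap.spectrum_eq]
        exact (hH.hasEigenvalue_eigenvalues hn i).mem_spectrum
      gcongr
      simpa using hgap _ hmem (by exact_mod_cast hμ)
  have hsq : ∀ z : E, ‖z‖ ^ 2 = ∑ i, ‖b.repr z i‖ ^ 2 := fun z => by
    rw [← b.repr.norm_map z, EuclideanSpace.norm_sq_eq]
  rw [← sq_le_sq₀ (by positivity) (norm_nonneg _), mul_pow, hsq, hsq, Finset.mul_sum]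
  gcongr with i
  rw [← mul_pow]
  exact pow_le_pow_left₀ (by positivity) (hcoord i) 2

theorem LinearMap.IsSymmetric.norm_le_inv_of_spectral_gap (hH : (H : E →ₗ[𝕜] E).IsSymmetric)
    (hΔ : 0 < Δ) (hgap : ∀ μ ∈ spectrum 𝕜 H, μ ≠ 0 → Δ ≤ ‖μ‖) {R : E →L[𝕜] E} (hHR : ‖H * R‖ ≤ 1)
    (hR : ∀ x z, H z = 0 → ⟪z, R x⟫_𝕜 = 0) : ‖R‖ ≤ Δ⁻¹ := by
  refine ContinuousLinearMap.opNorm_le_bound _ (by positivity) fun x => ?_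
  rw [inv_mul_eq_div, le_div_iff₀ hΔ, mul_comm]
  calc Δ * ‖R x‖ ≤ ‖(H * R) x‖ := hH.mul_norm_le_norm_apply_of_orthogonal_ker hΔ.le hgap (hR x)
    _ ≤ ‖H * R‖ * ‖x‖ := (H * R).le_opNorm x
    _ ≤ ‖x‖ := by nlinarith [norm_nonneg x]

end SpectralGap

section CorrectionStep

variable {A : Type*}

def correctionStep [Ring A] (P R W T : A) : A :=
  -((1 - P) * W * R * T) + R * T * W * P - R * T * W * R * W * P

theorem correctionStep_offDiagonal [Ring A] {P R W : A} (hRQ : R * (1 - P) = R) :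
    correctionStep P R W ((1 - P) * W * P) =
      -((1 - P) * W * R * W * P) + R * W * P * W * P - R * W * P * W * R * W * P := by
  have hR : ∀ X : A, R * ((1 - P) * X) = R * X := fun X => by rw [← mul_assoc, hRQ]
  simp only [correctionStep, mul_assoc, hR]

theorem one_sub_mul_correctionStep_mul [Ring A] {P R W T : A} (hP : IsIdempotentElem P)
    (hQR : (1 - P) * R = R) (hT : T * P = T) :
    (1 - P) * correctionStep P R W T * P = correctionStep P R W T := by
  have hQ : (1 - P) * (1 - P) = 1 - P := hP.one_sub.eq
  have hPP : P * P = P := hP.eq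
  unfold correctionStep
  generalize 1 - P = Q at *
  simp only [mul_sub, mul_add, mul_neg, ← mul_assoc, hQ, hQR]
  simp only [sub_mul, add_mul, neg_mul, mul_assoc, hPP, hT]

theorem norm_correctionStep_le [NormedRing A] {P R W : A} {ρ : ℝ} (hP : ‖P‖ ≤ 1)
    (hQ : ‖1 - P‖ ≤ 1) (hR : ‖R‖ ≤ ρ) (T : A) :
    ‖correctionStep P R W T‖ ≤ (2 * (‖W‖ * ρ) + (‖W‖ * ρ) ^ 2) * ‖T‖ := by
  have hW : ‖W‖ ≤ ‖W‖ := le_rfl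
  have hT : ‖T‖ ≤ ‖T‖ := le_rfl
  have h₁ : ‖(1 - P) * W * R * T‖ ≤ 1 * ‖W‖ * ρ * ‖T‖ :=
    norm_mul_le_of_le (norm_mul_le_of_le (norm_mul_le_of_le hQ hW) hR) hT
  have h₂ : ‖R * T * W * P‖ ≤ ρ * ‖T‖ * ‖W‖ * 1 :=
    norm_mul_le_of_le (norm_mul_le_of_le (norm_mul_le_of_le hR hT) hW) hP
  have h₃ : ‖R * T * W * R * W * P‖ ≤ ρ * ‖T‖ * ‖W‖ * ρ * ‖W‖ * 1 :=
    norm_mul_le_of_le (norm_mul_le_of_le (norm_mul_le_of_le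
      (norm_mul_le_of_le (norm_mul_le_of_le hR hT) hW) hR) hW) hP
  calc ‖correctionStep P R W T‖
      ≤ ‖(1 - P) * W * R * T‖ + ‖R * T * W * P‖ + ‖R * T * W * R * W * P‖ := by
        refine (norm_sub_le _ _).trans ?_
        gcongr
        exact (norm_add_le _ _).trans (by rw [norm_neg])
    _ ≤ _ := by linarith

theorem correctionStep_iterate_spec [NormedRing A] {P R W : A} {ρ : ℝ} (hP : IsIdempotentElem P)
    (hPn : ‖P‖ ≤ 1) (hQn : ‖1 - P‖ ≤ 1) (hQR : (1 - P) * R = R) (hR : ‖R‖ ≤ ρ) {S : ℕ → A}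
    (hS1 : S 1 = correctionStep P R W ((1 - P) * W * P))
    (hSrec : ∀ ℓ ≥ 1, S (ℓ + 1) = correctionStep P R W (S ℓ)) :
    ∀ ℓ ≥ 1, S ℓ = (1 - P) * S ℓ * P ∧
      ‖S ℓ‖ ≤ (2 * (‖W‖ * ρ) + (‖W‖ * ρ) ^ 2) ^ ℓ * ‖(1 - P) * W * P‖ := by
  have hr : 0 ≤ 2 * (‖W‖ * ρ) + (‖W‖ * ρ) ^ 2 := by
    have := (norm_nonneg R).trans hR
    positivity
  intro ℓ hℓ
  induction ℓ, hℓ using Nat.le_induction with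
  | base =>
    have hWP : (1 - P) * W * P * P = (1 - P) * W * P := by rw [mul_assoc _ P P, hP.eq]
    rw [hS1, pow_one]
    exact ⟨(one_sub_mul_correctionStep_mul hP hQR hWP).symm, norm_correctionStep_le hPn hQn hR _⟩
  | succ ℓ hℓ ih =>
    have hSP : S ℓ * P = S ℓ := by rw [ih.1, mul_assoc _ P P, hP.eq]
    rw [hSrec ℓ hℓ]
    refine ⟨(one_sub_mul_correctionStep_mul hP hQR hSP).symm, ?_⟩
    calc ‖correctionStep P R W (S ℓ)‖ ≤ (2 * (‖W‖ * ρ) + (‖W‖ * ρ) ^ 2) * ‖S ℓ‖ :=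
          norm_correctionStep_le hPn hQn hR _
      _ ≤ (2 * (‖W‖ * ρ) + (‖W‖ * ρ) ^ 2) *
          ((2 * (‖W‖ * ρ) + (‖W‖ * ρ) ^ 2) ^ ℓ * ‖(1 - P) * W * P‖) := by gcongr; exact ih.2
      _ = _ := by ring

end CorrectionStep

theorem hasSum_pow_succ_mul {r : ℝ} (h0 : 0 ≤ r) (h1 : r < 1) (a : ℝ) :
    HasSum (fun n : ℕ => r ^ (n + 1) * a) (r / (1 - r) * a) := by
  simpa only [pow_succ', div_eq_mul_inv] using
    ((hasSum_geometric_of_lt_one h0 h1).mul_left r).mul_right a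

-- `2κ + κ² ≤ 9κ/4` and `1 - (2κ + κ²) ≥ 7/16`, whence the ratio is at most `(9κ/4) / (7/16)`.
theorem two_mul_add_sq_div_one_sub_le {κ : ℝ} (h0 : 0 ≤ κ) (h : κ ≤ 1 / 4) :
    (2 * κ + κ ^ 2) / (1 - (2 * κ + κ ^ 2)) ≤ 36 / 7 * κ := by
  have hnum : 2 * κ + κ ^ 2 ≤ 9 / 4 * κ := by nlinarith
  have hden : 7 / 16 ≤ 1 - (2 * κ + κ ^ 2) := by nlinarith
  calc (2 * κ + κ ^ 2) / (1 - (2 * κ + κ ^ 2)) ≤ 9 / 4 * κ / (7 / 16) :=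
        div_le_div₀ (by positivity) hnum (by norm_num) hden
    _ = 36 / 7 * κ := by ring

theorem S_series_bounds_general
    {E : Type*} [NormedAddCommGroup E] [InnerProductSpace ℂ E] [FiniteDimensional ℂ E]
    (H₀ W P₀ R₀ : E →L[ℂ] E) (Δ : ℝ) (hΔ : 0 < Δ)
    (hH₀ : IsSelfAdjoint H₀)
    (hP₀sa : IsSelfAdjoint P₀) (hP₀idem : P₀ * P₀ = P₀)
    (hP₀ker : ∀ x : E, H₀ x = 0 ↔ P₀ x = x)
    (hgap : ∀ μ ∈ spectrum ℂ H₀, μ ≠ 0 → Δ ≤ ‖μ‖)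
    (hR₀ : R₀ = (1 - P₀) * R₀ * (1 - P₀))
    (hH₀R₀ : H₀ * R₀ = 1 - P₀)
    (κ : ℝ) (hκ : κ = ‖W‖ / Δ) (hκ4 : κ ≤ 1 / 4)
    (S : ℕ → (E →L[ℂ] E))
    (hS1 : S 1 = -((1 - P₀) * W * R₀ * W * P₀) + R₀ * W * P₀ * W * P₀
        - R₀ * W * P₀ * W * R₀ * W * P₀)
    (hSrec : ∀ ℓ ≥ 1, S (ℓ + 1) = -((1 - P₀) * W * R₀ * S ℓ) + R₀ * S ℓ * W * P₀
        - R₀ * S ℓ * W * R₀ * W * P₀) :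
    (∀ ℓ ≥ 1, S ℓ = (1 - P₀) * S ℓ * P₀ ∧
        ‖S ℓ‖ ≤ (2 * κ + κ ^ 2) ^ ℓ * ‖(1 - P₀) * W * P₀‖) ∧
    Summable (fun ℓ : ℕ => ‖S (ℓ + 1)‖) ∧
    ‖∑' ℓ : ℕ, S (ℓ + 1)‖ ≤ (2 * κ + κ ^ 2) / (1 - (2 * κ + κ ^ 2)) * ‖(1 - P₀) * W * P₀‖ ∧
    (2 * κ + κ ^ 2) / (1 - (2 * κ + κ ^ 2)) * ‖(1 - P₀) * W * P₀‖
      ≤ 36 / 7 * κ * ‖(1 - P₀) * W * P₀‖ := by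
  have hP : IsStarProjection P₀ := ⟨hP₀idem, hP₀sa⟩
  have hQ : (1 - P₀) * (1 - P₀) = 1 - P₀ := hP.one_sub.isIdempotentElem.eq
  have hQR : (1 - P₀) * R₀ = R₀ := by rw [hR₀]; simp only [← mul_assoc, hQ]
  have hRQ : R₀ * (1 - P₀) = R₀ := by rw [hR₀]; simp only [mul_assoc, hQ]
  have hPR : P₀ * R₀ = 0 := by rw [← hQR, ← mul_assoc, hP.mul_one_sub_self, zero_mul]
  have hRn : ‖R₀‖ ≤ Δ⁻¹ := by
    refine hH₀.isSymmetric.norm_le_inv_of_spectral_gap hΔ hgap (hH₀R₀ ▸ hP.one_sub.norm_le _)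
      fun x z hz => ?_
    rw [← (hP₀ker z).1 hz, ← ContinuousLinearMap.adjoint_inner_right, hP₀sa.adjoint_eq,
      show P₀ (R₀ x) = 0 from congrArg (· x) hPR, inner_zero_right]
  have hκρ : κ = ‖W‖ * Δ⁻¹ := hκ.trans (div_eq_mul_inv _ _)
  have hbounds := correctionStep_iterate_spec hP.isIdempotentElem (hP.norm_le _)
    (hP.one_sub.norm_le _) hQR hRn (by rw [hS1, correctionStep_offDiagonal hRQ]) hSrec
  rw [← hκρ] at hbounds
  have hκ0 : 0 ≤ κ := hκ ▸ by positivity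
  have hsum := hasSum_pow_succ_mul (r := 2 * κ + κ ^ 2) (by positivity) (by nlinarith)
    ‖(1 - P₀) * W * P₀‖
  have hterm : ∀ ℓ : ℕ, ‖S (ℓ + 1)‖ ≤ (2 * κ + κ ^ 2) ^ (ℓ + 1) * ‖(1 - P₀) * W * P₀‖ :=
    fun ℓ => (hbounds (ℓ + 1) ℓ.succ_pos).2
  exact ⟨hbounds, hsum.summable.of_nonneg_of_le (fun _ => norm_nonneg _) hterm,
    tsum_of_norm_bounded hsum hterm,
    mul_le_mul_of_nonneg_right (two_mul_add_sq_div_one_sub_le hκ0 hκ4) (norm_nonneg _)⟩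

/-- The recursively defined operators `S⁽ℓ⁾` satisfy `S⁽ℓ⁾ = Q₀S⁽ℓ⁾P₀` and
`‖S⁽ℓ⁾‖ ≤ (2κ+κ²)^ℓ ‖Q₀WP₀‖`, and the series `Σ_{ℓ≥1} S⁽ℓ⁾` converges absolutely with
`‖Σ_{ℓ=1}^∞ S⁽ℓ⁾‖ ≤ (2κ+κ²)/(1-2κ-κ²)‖Q₀WP₀‖ ≤ (36/7)κ‖Q₀WP₀‖`. -/
theorem S_series_bounds
    {E : Type*} [NormedAddCommGroup E] [InnerProductSpace ℂ E] [FiniteDimensional ℂ E]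
    (H₀ W P₀ R₀ : E →L[ℂ] E) (Δ : ℝ) (hΔ : 0 < Δ)
    (hH₀ : IsSelfAdjoint H₀) (hW : IsSelfAdjoint W)
    (hP₀sa : IsSelfAdjoint P₀) (hP₀idem : P₀ * P₀ = P₀)
    (hP₀ker : ∀ x : E, H₀ x = 0 ↔ P₀ x = x)
    (hgap : ∀ μ ∈ spectrum ℂ H₀, μ ≠ 0 → Δ ≤ ‖μ‖)
    (hR₀ : R₀ = (1 - P₀) * R₀ * (1 - P₀))
    (hR₀H₀ : R₀ * H₀ = 1 - P₀) (hH₀R₀ : H₀ * R₀ = 1 - P₀)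
    (κ : ℝ) (hκ : κ = ‖W‖ / Δ) (hκ4 : κ ≤ 1 / 4)
    (S : ℕ → (E →L[ℂ] E))
    (hS1 : S 1 = -((1 - P₀) * W * R₀ * W * P₀) + R₀ * W * P₀ * W * P₀
        - R₀ * W * P₀ * W * R₀ * W * P₀)
    (hSrec : ∀ ℓ ≥ 1, S (ℓ + 1) = -((1 - P₀) * W * R₀ * S ℓ) + R₀ * S ℓ * W * P₀
        - R₀ * S ℓ * W * R₀ * W * P₀) :
    (∀ ℓ ≥ 1, S ℓ = (1 - P₀) * S ℓ * P₀ ∧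
        ‖S ℓ‖ ≤ (2 * κ + κ ^ 2) ^ ℓ * ‖(1 - P₀) * W * P₀‖) ∧
    Summable (fun ℓ : ℕ => ‖S (ℓ + 1)‖) ∧
    ‖∑' ℓ : ℕ, S (ℓ + 1)‖ ≤ (2 * κ + κ ^ 2) / (1 - (2 * κ + κ ^ 2)) * ‖(1 - P₀) * W * P₀‖ ∧
    (2 * κ + κ ^ 2) / (1 - (2 * κ + κ ^ 2)) * ‖(1 - P₀) * W * P₀‖
      ≤ 36 / 7 * κ * ‖(1 - P₀) * W * P₀‖ :=
  S_series_bounds_general H₀ W P₀ R₀ Δ hΔ hH₀ hP₀sa hP₀idem hP₀ker hgap hR₀ hH₀R₀ κ hκ hκ4 S hS1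
    hSrec
end
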